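/- arXiv:1704.06932 — 4 statements merged into one kernel-verified Lean document; each statement's English description precedes it below -/
import Mathlib

section
/- Let A be a nonempty subset of a real vector space X equipped with the core convex topology τ_c, and let {A_i}_{i∈I} be the family of all convex components (maximal convex subsets) of A. Then int_c(A) = ∪_{i∈I} cor(A_i). -/
open Pointwise

/-- Algebraic interior (core) of a set `A` in a real vector space:
`cor A = {x ∈ A | ∀ d, ∃ δ > 0, ∀ λ ∈ [0, δ], x + λ • d ∈ A}`. -/
def cor {X : Type*} [AddCommGroup X] [Module ℝ X] (A : Set X) : Set X :=
  {x | x ∈ A ∧ ∀ d : X, ∃ δ : ℝ, 0 < δ ∧ ∀ lam ∈ Set.Icc (0 : ℝ) δ, x + lam • d ∈ A}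

/-- Relative algebraic interior of `A`: directions are taken in `L(A) = span (A - A)`. -/
def icr {X : Type*} [AddCommGroup X] [Module ℝ X] (A : Set X) : Set X :=
  {x | x ∈ A ∧ ∀ d ∈ Submodule.span ℝ (A - A),
    ∃ δ : ℝ, 0 < δ ∧ ∀ lam ∈ Set.Icc (0 : ℝ) δ, x + lam • d ∈ A}

/-- Vectorial closure of `A`:
`vcl A = {b | ∃ d, ∀ δ > 0, ∃ λ ∈ [0, δ], b + λ • d ∈ A}`. -/
def vcl {X : Type*} [AddCommGroup X] [Module ℝ X] (A : Set X) : Set X :=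
  {b | ∃ d : X, ∀ δ : ℝ, 0 < δ → ∃ lam ∈ Set.Icc (0 : ℝ) δ, b + lam • d ∈ A}

/-- The core convex topology `τ_c`: the topology whose open sets are the unions of
members of `𝔅 = {A | A convex and cor A = A}`; since `𝔅` is a topological basis
(closed under binary intersection, contains `X` and `∅`), this is the topology
generated by `𝔅`. -/
def tauc (X : Type*) [AddCommGroup X] [Module ℝ X] : TopologicalSpace X :=
  TopologicalSpace.generateFrom {A : Set X | Convex ℝ A ∧ cor A = A}

/-- `B` is a convex component of `A`: a maximal (w.r.t. inclusion) convex subset of `A`. -/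
def IsConvexComponent {X : Type*} [AddCommGroup X] [Module ℝ X] (A B : Set X) : Prop :=
  B ⊆ A ∧ Convex ℝ B ∧ ∀ C : Set X, C ⊆ A → Convex ℝ C → B ⊆ C → C = B

section Aux

variable {X : Type*} [AddCommGroup X] [Module ℝ X]

lemma cor_subset' (A : Set X) : cor A ⊆ A := fun _ hx => hx.1

lemma cor_mono' {A B : Set X} (h : A ⊆ B) : cor A ⊆ cor B := by
  rintro x ⟨hxA, hd⟩
  refine ⟨h hxA, fun d => ?_⟩
  obtain ⟨δ, hδ, hs⟩ := hd d
  exact ⟨δ, hδ, fun lam hlam => h (hs lam hlam)⟩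

lemma convex_cor' {B : Set X} (hB : Convex ℝ B) : Convex ℝ (cor B) := by
  rintro x ⟨hx, hdx⟩ y ⟨hy, hdy⟩ a b ha hb hab
  refine ⟨hB hx hy ha hb hab, fun d => ?_⟩
  obtain ⟨δ1, hδ1, h1⟩ := hdx d
  obtain ⟨δ2, hδ2, h2⟩ := hdy d
  refine ⟨min δ1 δ2, lt_min hδ1 hδ2, fun lam hlam => ?_⟩
  have h1' := h1 lam ⟨hlam.1, hlam.2.trans (min_le_left _ _)⟩
  have h2' := h2 lam ⟨hlam.1, hlam.2.trans (min_le_right _ _)⟩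
  have hb' : b = 1 - a := by linarith
  have key : a • x + b • y + lam • d = a • (x + lam • d) + b • (y + lam • d) := by
    subst hb'; module
  rw [key]
  exact hB h1' h2' ha hb hab

lemma cor_segment' {B : Set X} (hB : Convex ℝ B) {x y : X} (hx : x ∈ cor B) (hy : y ∈ B)
    {t : ℝ} (ht0 : 0 ≤ t) (ht1 : t < 1) : (1 - t) • x + t • y ∈ cor B := by
  refine ⟨hB hx.1 hy (by linarith) ht0 (by ring), fun d => ?_⟩
  obtain ⟨δ, hδ, hs⟩ := hx.2 d
  have h1t : (0 : ℝ) < 1 - t := by linarith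
  refine ⟨(1 - t) * δ, mul_pos h1t hδ, fun lam hlam => ?_⟩
  have hmem : x + (lam / (1 - t)) • d ∈ B := by
    refine hs _ ⟨div_nonneg hlam.1 h1t.le, ?_⟩
    rw [div_le_iff₀ h1t]
    linarith [hlam.2]
  have key : (1 - t) • x + t • y + lam • d
      = (1 - t) • (x + (lam / (1 - t)) • d) + t • y := by
    rw [smul_add, smul_smul, mul_div_cancel₀ _ h1t.ne']
    abel
  rw [key]
  exact hB hmem hy (le_of_lt h1t) ht0 (by ring)

lemma cor_cor' {B : Set X} (hB : Convex ℝ B) : cor (cor B) = cor B := by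
  refine Set.Subset.antisymm (cor_subset' _) fun x hx => ?_
  refine ⟨hx, fun d => ?_⟩
  obtain ⟨δ, hδ, hs⟩ := hx.2 d
  refine ⟨δ / 2, half_pos hδ, fun lam hlam => ?_⟩
  have hyB : x + δ • d ∈ B := hs δ ⟨hδ.le, le_refl _⟩
  have ht0 : 0 ≤ lam / δ := div_nonneg hlam.1 hδ.le
  have ht1 : lam / δ < 1 := by
    rw [div_lt_one hδ]; linarith [hlam.2]
  have key : x + lam • d = (1 - lam / δ) • x + (lam / δ) • (x + δ • d) := by
    rw [smul_add, smul_smul, div_mul_cancel₀ _ hδ.ne']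
    module
  rw [key]
  exact cor_segment' hB hx hyB ht0 ht1

lemma cor_inter' {s t : Set X} (hs : cor s = s) (ht : cor t = t) : cor (s ∩ t) = s ∩ t := by
  refine Set.Subset.antisymm (cor_subset' _) fun x hx => ?_
  refine ⟨hx, fun d => ?_⟩
  obtain ⟨δ1, hδ1, h1⟩ := (show x ∈ cor s by rw [hs]; exact hx.1).2 d
  obtain ⟨δ2, hδ2, h2⟩ := (show x ∈ cor t by rw [ht]; exact hx.2).2 d
  refine ⟨min δ1 δ2, lt_min hδ1 hδ2, fun lam hlam => ?_⟩
  exact ⟨h1 lam ⟨hlam.1, hlam.2.trans (min_le_left _ _)⟩,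
    h2 lam ⟨hlam.1, hlam.2.trans (min_le_right _ _)⟩⟩

lemma exists_basic_mem {U : Set X}
    (hU : TopologicalSpace.GenerateOpen {A : Set X | Convex ℝ A ∧ cor A = A} U) :
    ∀ x ∈ U, ∃ C : Set X, Convex ℝ C ∧ cor C = C ∧ x ∈ C ∧ C ⊆ U := by
  induction hU with
  | basic V hV => exact fun x hx => ⟨V, hV.1, hV.2, hx, subset_rfl⟩
  | univ =>
    refine fun x _ => ⟨Set.univ, convex_univ, ?_, trivial, subset_rfl⟩
    refine Set.Subset.antisymm (cor_subset' _) fun y _ => ?_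
    exact ⟨trivial, fun d => ⟨1, one_pos, fun _ _ => trivial⟩⟩
  | inter a b _ _ iha ihb =>
    rintro x ⟨hxa, hxb⟩
    obtain ⟨C1, hC1c, hC1cor, hxC1, hC1a⟩ := iha x hxa
    obtain ⟨C2, hC2c, hC2cor, hxC2, hC2b⟩ := ihb x hxb
    exact ⟨C1 ∩ C2, hC1c.inter hC2c, cor_inter' hC1cor hC2cor, ⟨hxC1, hxC2⟩,
      Set.inter_subset_inter hC1a hC2b⟩
  | sUnion S _ ih =>
    rintro x ⟨t, htS, hxt⟩
    obtain ⟨C, hcc, hcor, hxC, hCt⟩ := ih t htS x hxt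
    exact ⟨C, hcc, hcor, hxC, hCt.trans (Set.subset_sUnion_of_mem htS)⟩

end Aux

/-- For a nonempty set `A` in `(X, τ_c)`, the `τ_c`-interior of `A` is the
union of the algebraic interiors of the convex components of `A`. -/
theorem stmt9 {X : Type*} [AddCommGroup X] [Module ℝ X] {A : Set X} (hA : A.Nonempty) :
    @interior X (tauc X) A = ⋃ B ∈ {B : Set X | IsConvexComponent A B}, cor B := by
  letI : TopologicalSpace X := tauc X
  apply Set.Subset.antisymm
  · intro x hx
    obtain ⟨U, hUA, hUopen, hxU⟩ := mem_interior.1 hx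
    obtain ⟨C, hCc, hCcor, hxC, hCU⟩ := exists_basic_mem hUopen x hxU
    have hCA : C ⊆ A := hCU.trans hUA
    -- extend C to a convex component via Zorn
    set S : Set (Set X) := {t | t ⊆ A ∧ Convex ℝ t} with hS
    obtain ⟨B, hCB, hBS, hBmax⟩ := zorn_subset_nonempty S (fun c hcS hchain _ => by
      refine ⟨⋃₀ c, ⟨?_, ?_⟩, fun s hs => Set.subset_sUnion_of_mem hs⟩
      · exact Set.sUnion_subset fun s hs => (hcS hs).1
      · exact hchain.directedOn.convex_sUnion fun s hs => (hcS hs).2)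
      C ⟨hCA, hCc⟩
    refine Set.mem_biUnion (show IsConvexComponent A B from ?_) ?_
    · exact ⟨hBS.1, hBS.2, fun C' hC'A hC'c hBC' =>
        Set.Subset.antisymm (hBmax ⟨hC'A, hC'c⟩ hBC') hBC'⟩
    · exact cor_mono' hCB (show x ∈ cor C by rw [hCcor]; exact hxC)
  · refine Set.iUnion₂_subset fun B hB => ?_
    have hopen : IsOpen (cor B) :=
      TopologicalSpace.isOpen_generateFrom_of_mem ⟨convex_cor' hB.2.1, cor_cor' hB.2.1⟩
    exact interior_maximal ((cor_subset' B).trans hB.1) hopen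
end

section
/- Let X be an infinite-dimensional real vector space equipped with the core convex topology τ_c. Then (X, τ_c) is not metrizable, i.e., there is no metric on X whose open sets coincide with the τ_c-open sets. -/
/-!
Every `τ_c`-open set `U` is algebraically open (`cor U = U`), so each `τ_c`-neighbourhood of `0`
contains a positive multiple of every vector. Given countably many neighbourhoods `U n` of `0`,
index a Hamel basis surjectively by `ℕ` via `k` and rescale each basis vector `e i` into
`U (k i)`. The open unit ball of the `ℓ¹`-seminorm of the rescaled basis is convex and
algebraically open, hence a `τ_c`-neighbourhood of `0`, but it contains none of the rescaled basis
vectors, so it contains no `U n`. Hence `0` has no countable neighbourhood base, whereas every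
metric space is first countable.
-/

open Pointwise

open Topology

section CoreConvexTopology

variable {X : Type*} [AddCommGroup X] [Module ℝ X]

theorem cor_eq_self_iff {A : Set X} :
    cor A = A ↔ ∀ x ∈ A, ∀ d : X, ∃ δ : ℝ, 0 < δ ∧ ∀ lam ∈ Set.Icc (0 : ℝ) δ, x + lam • d ∈ A :=
  Set.sep_eq_self_iff_mem_true

theorem cor_univ : cor (Set.univ : Set X) = Set.univ :=
  cor_eq_self_iff.2 fun _ _ _ => ⟨1, one_pos, fun _ _ => trivial⟩

theorem cor_inter {A B : Set X} (hA : cor A = A) (hB : cor B = B) : cor (A ∩ B) = A ∩ B := by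
  refine cor_eq_self_iff.2 fun x ⟨hxA, hxB⟩ d => ?_
  obtain ⟨δ₁, hδ₁, h₁⟩ := cor_eq_self_iff.1 hA x hxA d
  obtain ⟨δ₂, hδ₂, h₂⟩ := cor_eq_self_iff.1 hB x hxB d
  exact ⟨min δ₁ δ₂, lt_min hδ₁ hδ₂, fun lam hlam =>
    ⟨h₁ lam ⟨hlam.1, hlam.2.trans (min_le_left _ _)⟩,
      h₂ lam ⟨hlam.1, hlam.2.trans (min_le_right _ _)⟩⟩⟩

theorem cor_sUnion {S : Set (Set X)} (hS : ∀ A ∈ S, cor A = A) : cor (⋃₀ S) = ⋃₀ S := by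
  refine cor_eq_self_iff.2 fun x ⟨A, hAS, hxA⟩ d => ?_
  obtain ⟨δ, hδ, h⟩ := cor_eq_self_iff.1 (hS A hAS) x hxA d
  exact ⟨δ, hδ, fun lam hlam => ⟨A, hAS, h lam hlam⟩⟩

theorem cor_eq_self_of_isOpen_tauc {U : Set X} (hU : IsOpen[tauc X] U) : cor U = U := by
  induction hU with
  | basic A hA => exact hA.2
  | univ => exact cor_univ
  | inter A B _ _ hA hB => exact cor_inter hA hB
  | sUnion S _ hS => exact cor_sUnion hS

theorem exists_add_smul_mem_of_mem_nhds_tauc {x : X} {U : Set X} (hU : U ∈ @nhds X (tauc X) x)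
    (d : X) : ∃ δ : ℝ, 0 < δ ∧ ∀ lam ∈ Set.Icc (0 : ℝ) δ, x + lam • d ∈ U := by
  obtain ⟨W, hWU, hW, hxW⟩ := (@mem_nhds_iff X (tauc X) x U).1 hU
  obtain ⟨δ, hδ, h⟩ := cor_eq_self_iff.1 (cor_eq_self_of_isOpen_tauc hW) x hxW d
  exact ⟨δ, hδ, fun lam hlam => hWU (h lam hlam)⟩

theorem cor_seminorm_ball (p : Seminorm ℝ X) (x : X) (r : ℝ) : cor (p.ball x r) = p.ball x r := by
  refine cor_eq_self_iff.2 fun y hy d => ?_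
  rw [Seminorm.mem_ball] at hy
  refine ⟨(r - p (y - x)) / (p d + 1), div_pos (by linarith) (by linarith [apply_nonneg p d]),
    fun lam ⟨hlam0, hlam⟩ => ?_⟩
  rw [Seminorm.mem_ball]
  have hδ : (r - p (y - x)) / (p d + 1) * p d < r - p (y - x) := by
    rw [div_mul_eq_mul_div, div_lt_iff₀ (by linarith [apply_nonneg p d])]
    nlinarith
  calc p (y + lam • d - x) ≤ p (y - x) + lam * p d := by
        rw [add_sub_right_comm]
        exact (map_add_le_add p _ _).trans_eq (by rw [map_smul_eq_mul, Real.norm_of_nonneg hlam0])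
    _ ≤ p (y - x) + (r - p (y - x)) / (p d + 1) * p d := by gcongr
    _ < r := by linarith

theorem isOpen_tauc_seminorm_ball (p : Seminorm ℝ X) (x : X) (r : ℝ) :
    IsOpen[tauc X] (p.ball x r) :=
  TopologicalSpace.isOpen_generateFrom_of_mem ⟨p.convex_ball x r, cor_seminorm_ball p x r⟩

end CoreConvexTopology

namespace Module.Basis

variable {𝕜 ι X : Type*} [NormedField 𝕜] [AddCommGroup X] [Module 𝕜 X]

theorem sum_norm_repr_eq_sum_of_support_subset (b : Basis ι 𝕜 X) (x : X) {s : Finset ι}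
    (hs : (b.repr x).support ⊆ s) :
    ((b.repr x).sum fun _ c => ‖c‖) = ∑ i ∈ s, ‖b.repr x i‖ :=
  Finsupp.sum_of_support_subset _ hs _ fun _ _ => norm_zero

noncomputable def l1Seminorm (b : Basis ι 𝕜 X) : Seminorm 𝕜 X :=
  Seminorm.of (fun x => (b.repr x).sum fun _ c => ‖c‖)
    (fun x y => by
      classical
      have hxy : (b.repr (x + y)).support ⊆ (b.repr x).support ∪ (b.repr y).support := by
        rw [map_add]; exact Finsupp.support_add
      rw [b.sum_norm_repr_eq_sum_of_support_subset _ hxy,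
        b.sum_norm_repr_eq_sum_of_support_subset x Finset.subset_union_left,
        b.sum_norm_repr_eq_sum_of_support_subset y Finset.subset_union_right,
        ← Finset.sum_add_distrib]
      exact Finset.sum_le_sum fun i _ => by
        rw [map_add, Finsupp.add_apply]; exact norm_add_le _ _)
    (fun a x => by
      rw [map_smul, Finsupp.sum_smul_index' fun _ => norm_zero, Finsupp.mul_sum]
      simp only [smul_eq_mul, norm_mul])

theorem l1Seminorm_apply (b : Basis ι 𝕜 X) (x : X) :
    b.l1Seminorm x = (b.repr x).sum fun _ c => ‖c‖ :=
  rfl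

theorem l1Seminorm_self (b : Basis ι 𝕜 X) (i : ι) : b.l1Seminorm (b i) = 1 := by
  simp [l1Seminorm_apply]

end Module.Basis

theorem not_isCountablyGenerated_nhds_zero_tauc {X : Type*} [AddCommGroup X] [Module ℝ X]
    (hX : ¬ FiniteDimensional ℝ X) : ¬ (@nhds X (tauc X) 0).IsCountablyGenerated := by
  let := tauc X
  intro hc
  obtain ⟨U, hU⟩ := (𝓝 (0 : X)).exists_antitone_basis
  let b := Module.Basis.ofVectorSpace ℝ X
  have : Infinite (Module.Basis.ofVectorSpaceIndex ℝ X) :=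
    not_finite_iff_infinite.1 fun _ => hX (Module.Finite.of_basis b)
  obtain ⟨k, hk⟩ : ∃ k : Module.Basis.ofVectorSpaceIndex ℝ X → ℕ, k.Surjective :=
    ⟨_, Function.invFun_surjective (Infinite.natEmbedding _).injective⟩
  have hs : ∀ i, ∃ s : ℝ, 0 < s ∧ s • b i ∈ U (k i) := fun i => by
    obtain ⟨s, hs, h⟩ := exists_add_smul_mem_of_mem_nhds_tauc (hU.mem (k i)) (b i)
    exact ⟨s, hs, by simpa using h s ⟨hs.le, le_rfl⟩⟩
  choose s hs_pos hs_mem using hs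
  let b' := b.isUnitSMul fun i => (hs_pos i).ne'.isUnit
  have hV : b'.l1Seminorm.ball 0 1 ∈ 𝓝 (0 : X) :=
    (isOpen_tauc_seminorm_ball _ _ _).mem_nhds (Seminorm.mem_ball_self _ zero_lt_one)
  obtain ⟨n, -, hn⟩ := hU.toHasBasis.mem_iff.1 hV
  obtain ⟨i, rfl⟩ := hk n
  have hb'i : b' i ∈ b'.l1Seminorm.ball 0 1 := hn (b.isUnitSMul_apply _ i ▸ hs_mem i)
  rw [Seminorm.mem_ball_zero, b'.l1Seminorm_self] at hb'i
  exact lt_irrefl _ hb'i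

/-- If `X` is infinite-dimensional, then `(X, τ_c)` is not metrizable:
no metric on `X` has its open sets coinciding with the `τ_c`-open sets. -/
theorem stmt15 (X : Type*) [AddCommGroup X] [Module ℝ X]
    (hinf : ¬ FiniteDimensional ℝ X) :
    ¬ ∃ m : MetricSpace X, m.toUniformSpace.toTopologicalSpace = tauc X := by
  rintro ⟨m, hm⟩
  refine not_isCountablyGenerated_nhds_zero_tauc hinf ?_
  rw [← hm]
  infer_instance
end

section
/- Let X be a real vector space and let A, B be disjoint nonempty convex subsets of X with cor(A) ≠ ∅. Then there exist a nonzero linear functional f : X → ℝ and a scalar α ∈ ℝ such that f(a) ≤ α ≤ f(b) for all a ∈ A and b ∈ B, and moreover f(a) < α for all a ∈ cor(A). -/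
open Pointwise

/-! Translating the convex set `A - B` by minus its core point `x₀ - b₀` gives a set `D` that is
absorbent, so its gauge is a sublinear functional; `0 ∉ A - B` places `b₀ - x₀` outside `D`,
hence at gauge at least `1`. Hahn–Banach extends `t (b₀ - x₀) ↦ t` below the gauge, which gives
`f ≤ f(b₀ - x₀) = 1` on `D`, i.e. `f a ≤ f b` for `a ∈ A`, `b ∈ B`. On `cor A` the inequality is
strict because one can still move from a core point in a direction where `f` increases. -/

section Core

variable {X : Type*} [AddCommGroup X] [Module ℝ X]

lemma absorbent_of_zero_mem_cor {D : Set X} (h : (0 : X) ∈ cor D) : Absorbent ℝ D := by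
  refine absorbent_iff_eventually_nhdsNE_zero.2 fun x => ?_
  obtain ⟨δ₁, hδ₁, hx⟩ := h.2 x
  obtain ⟨δ₂, hδ₂, hnegx⟩ := h.2 (-x)
  refine .filter_mono nhdsWithin_le_nhds ?_
  filter_upwards [Ioo_mem_nhds (neg_lt_zero.2 (lt_min hδ₁ hδ₂)) (lt_min hδ₁ hδ₂)]
    with c ⟨hlo, hhi⟩
  rcases le_total 0 c with hc | hc
  · simpa using hx c ⟨hc, hhi.le.trans (min_le_left _ _)⟩
  · simpa using hnegx (-c) ⟨neg_nonneg.2 hc, by linarith [min_le_right δ₁ δ₂]⟩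

lemma vadd_mem_cor_vadd {C : Set X} {x : X} (h : x ∈ cor C) (v : X) : v +ᵥ x ∈ cor (v +ᵥ C) := by
  refine ⟨Set.vadd_mem_vadd_set h.1, fun d => ?_⟩
  obtain ⟨δ, hδ, hmem⟩ := h.2 d
  refine ⟨δ, hδ, fun t ht => ?_⟩
  rw [vadd_eq_add, add_assoc]
  exact Set.vadd_mem_vadd_set (hmem t ht)

lemma sub_mem_cor_sub {A B : Set X} {x b : X} (hx : x ∈ cor A) (hb : b ∈ B) :
    x - b ∈ cor (A - B) := by
  refine ⟨Set.sub_mem_sub hx.1 hb, fun d => ?_⟩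
  obtain ⟨δ, hδ, hmem⟩ := hx.2 d
  refine ⟨δ, hδ, fun t ht => ?_⟩
  rw [sub_add_eq_add_sub]
  exact Set.sub_mem_sub (hmem t ht) hb

lemma exists_eq_one_le_one_of_zero_mem_cor {D : Set X} (hD : Convex ℝ D) (h0 : (0 : X) ∈ cor D)
    {z : X} (hz : z ∉ D) : ∃ f : X →ₗ[ℝ] ℝ, f z = 1 ∧ ∀ x ∈ D, f x ≤ 1 := by
  have habs := absorbent_of_zero_mem_cor h0
  let g : X →ₗ.[ℝ] ℝ := LinearPMap.mkSpanSingleton z 1 (ne_of_mem_of_not_mem h0.1 hz).symm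
  have hg : ∀ x : g.domain, g x ≤ gauge D x := by
    rintro ⟨x, hx⟩
    obtain ⟨t, rfl⟩ := Submodule.mem_span_singleton.1 hx
    rw [LinearPMap.mkSpanSingleton'_apply, smul_eq_mul, mul_one]
    rcases le_or_gt t 0 with ht | ht
    · exact ht.trans (gauge_nonneg _)
    · rw [gauge_smul_of_nonneg ht.le, smul_eq_mul, RingHom.id_apply,
        le_mul_iff_one_le_right ht]
      exact one_le_gauge_of_notMem (hD.starConvex h0.1) (habs z) hz
  obtain ⟨f, hfg, hf⟩ := exists_extension_of_le_sublinear g (gauge D)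
    (fun c hc x => gauge_smul_of_nonneg hc.le x) (gauge_add_le hD habs) hg
  refine ⟨f, ?_, fun x hx => (hf x).trans (gauge_le_one_of_mem hx)⟩
  exact (hfg ⟨z, Submodule.mem_span_singleton_self z⟩).trans
    (LinearPMap.mkSpanSingleton_apply ℝ ℝ _ 1)

lemma exists_le_of_mem_cor_of_notMem {C : Set X} (hC : Convex ℝ C) {x y : X} (hx : x ∈ cor C)
    (hy : y ∉ C) : ∃ f : X →ₗ[ℝ] ℝ, f ≠ 0 ∧ ∀ c ∈ C, f c ≤ f y := by
  have h0 : (0 : X) ∈ cor (-x +ᵥ C) := by simpa using vadd_mem_cor_vadd hx (-x)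
  have hz : -x + y ∉ -x +ᵥ C := fun h => hy (Set.vadd_mem_vadd_set_iff.1 h)
  obtain ⟨f, hfz, hf⟩ := exists_eq_one_le_one_of_zero_mem_cor (hC.vadd (-x)) h0 hz
  refine ⟨f, fun h => by simp [h] at hfz, fun c hc => ?_⟩
  have := hf (-x + c) (Set.vadd_mem_vadd_set hc)
  rw [map_add] at this hfz
  linarith

lemma lt_of_mem_cor {A : Set X} {f : X →ₗ[ℝ] ℝ} (hf : f ≠ 0) {α : ℝ} (hA : ∀ a ∈ A, f a ≤ α)
    {a : X} (ha : a ∈ cor A) : f a < α := by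
  obtain ⟨d, hd⟩ : ∃ d, f d ≠ 0 := by
    by_contra! h
    exact hf (LinearMap.ext h)
  obtain ⟨δ, hδ, hmem⟩ := ha.2 ((f d)⁻¹ • d)
  have := hA _ (hmem δ ⟨hδ.le, le_rfl⟩)
  rw [map_add, map_smul, map_smul, smul_eq_mul, smul_eq_mul, inv_mul_cancel₀ hd, mul_one] at this
  linarith

end Core

theorem stmt17_general {X : Type*} [AddCommGroup X] [Module ℝ X] {A B : Set X}
    (hA : Convex ℝ A) (hB : Convex ℝ B) (hBne : B.Nonempty)
    (hdisj : Disjoint A B) (hcor : (cor A).Nonempty) :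
    ∃ (f : X →ₗ[ℝ] ℝ) (α : ℝ), f ≠ 0 ∧
      (∀ a ∈ A, f a ≤ α) ∧ (∀ b ∈ B, α ≤ f b) ∧ (∀ a ∈ cor A, f a < α) := by
  obtain ⟨x₀, hx₀⟩ := hcor
  obtain ⟨b₀, hb₀⟩ := hBne
  have h0 : (0 : X) ∉ A - B := by
    rintro ⟨a, ha, b, hb, hab⟩
    exact Set.disjoint_left.1 hdisj ha (sub_eq_zero.1 hab ▸ hb)
  obtain ⟨f, hf0, hf⟩ := exists_le_of_mem_cor_of_notMem (hA.sub hB) (sub_mem_cor_sub hx₀ hb₀) h0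
  have hAB : ∀ a ∈ A, ∀ b ∈ B, f a ≤ f b := fun a ha b hb => by
    simpa [sub_nonpos] using hf _ (Set.sub_mem_sub ha hb)
  have hBf : (f '' B).Nonempty := ⟨f b₀, b₀, hb₀, rfl⟩
  have hAle : ∀ a ∈ A, f a ≤ sInf (f '' B) := fun a ha =>
    le_csInf hBf (Set.forall_mem_image.2 (hAB a ha))
  refine ⟨f, sInf (f '' B), hf0, hAle, fun b hb => ?_, fun a ha => lt_of_mem_cor hf0 hAle ha⟩
  exact csInf_le ⟨f x₀, Set.forall_mem_image.2 (hAB x₀ hx₀.1)⟩ ⟨b, hb, rfl⟩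

/-- Separation theorem. If `A, B` are disjoint nonempty convex subsets of a
real vector space `X` with `cor A ≠ ∅`, then there are a nonzero linear functional `f`
and `α ∈ ℝ` with `f a ≤ α ≤ f b` for all `a ∈ A`, `b ∈ B`, and `f a < α` on `cor A`. -/
theorem stmt17 {X : Type*} [AddCommGroup X] [Module ℝ X] {A B : Set X}
    (hA : Convex ℝ A) (hB : Convex ℝ B) (hAne : A.Nonempty) (hBne : B.Nonempty)
    (hdisj : Disjoint A B) (hcor : (cor A).Nonempty) :
    ∃ (f : X →ₗ[ℝ] ℝ) (α : ℝ), f ≠ 0 ∧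
      (∀ a ∈ A, f a ≤ α) ∧ (∀ b ∈ B, α ≤ f b) ∧ (∀ a ∈ cor A, f a < α) :=
  stmt17_general hA hB hBne hdisj hcor
end

section
/- Let X be a real vector space and let A, B be disjoint nonempty convex subsets of X such that A is vectorially closed (vcl(A) = A) and relatively solid (icr(A) ≠ ∅), B is contained in a finite-dimensional linear subspace Y of X, and B is compact in Y (with respect to the standard topology of the finite-dimensional space Y). Then A and B can be strongly separated by a linear functional: there exist a linear functional f : X → ℝ and real numbers α < β such that f(a) ≤ α for all a ∈ A and f(b) ≥ β for all b ∈ B. -/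
open Pointwise

/-! For every `b ∈ B` there is a functional `F_b` with `sup_A F_b < F_b b`. If `b` lies in the
affine hull of `A`, take `a₀ ∈ icr A` and apply Hahn–Banach to the gauge of `A - a₀` inside
`L(A)`: the set is absorbent there, and `vcl A = A` makes it contain `{gauge ≤ 1}`, so the gauge
exceeds `1` at `b - a₀`. Otherwise a functional vanishing on `L(A)` does. Linear functionals are
`τ_c`-continuous, so `Φ x = (F_b x)_{b ∈ B}` maps `B` onto a compact convex subset of `ℝ^B`
which misses the closed box `∏ (-∞, sup_A F_b]` containing `Φ A`. Strict separation of these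
two sets in the locally convex space `ℝ^B`, composed with `Φ`, separates `A` from `B`. -/

open Set Topology

section
variable {E : Type*} [AddCommGroup E] [Module ℝ E]

theorem absorbent_of_forall_exists_Icc_smul_mem {S : Set E}
    (h : ∀ d : E, ∃ δ : ℝ, 0 < δ ∧ ∀ t ∈ Icc (0 : ℝ) δ, t • d ∈ S) : Absorbent ℝ S := by
  refine absorbent_iff_eventually_nhdsNE_zero.2 fun x => ?_
  obtain ⟨δ₁, hδ₁, h₁⟩ := h x
  obtain ⟨δ₂, hδ₂, h₂⟩ := h (-x)
  refine nhdsWithin_le_nhds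
    (Filter.mem_of_superset (Ioo_mem_nhds (neg_neg_of_pos hδ₂) hδ₁) fun c hc => ?_)
  rcases le_total 0 c with hc0 | hc0
  · exact h₁ c ⟨hc0, hc.2.le⟩
  · simpa using h₂ (-c) ⟨neg_nonneg.2 hc0, by linarith [hc.1]⟩

theorem exists_linearMap_eq_gauge_le_gauge {S : Set E} (hS : Convex ℝ S)
    (hSabs : Absorbent ℝ S) (x : E) :
    ∃ f : E →ₗ[ℝ] ℝ, f x = gauge S x ∧ ∀ y, f y ≤ gauge S y := by
  let f₀ := LinearPMap.mkSpanSingleton' (σ := RingHom.id ℝ) x (gauge S x) fun c hc => by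
    rcases smul_eq_zero.1 hc with rfl | rfl <;> simp
  have hf₀ : ∀ z : f₀.domain, f₀ z ≤ gauge S z := by
    rintro ⟨z, hz⟩
    obtain ⟨t, rfl⟩ := Submodule.mem_span_singleton.1 hz
    rw [LinearPMap.mkSpanSingleton'_apply, RingHom.id_apply, smul_eq_mul]
    rcases le_total 0 t with ht | ht
    · rw [gauge_smul_of_nonneg ht, smul_eq_mul]
    · exact (mul_nonpos_of_nonpos_of_nonneg ht (gauge_nonneg x)).trans (gauge_nonneg _)
  obtain ⟨f, hff₀, hf⟩ := exists_extension_of_le_sublinear f₀ (gauge S)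
    (fun c hc y => by rw [gauge_smul_of_nonneg hc.le, smul_eq_mul]) (gauge_add_le hS hSabs) hf₀
  refine ⟨f, ?_, hf⟩
  rw [hff₀ ⟨x, Submodule.mem_span_singleton_self x⟩]
  exact LinearPMap.mkSpanSingleton'_apply_self _ _ _ _

theorem mem_vcl_of_forall_Ico {A : Set E} {x v : E} (h : ∀ t ∈ Ico (0 : ℝ) 1, x + t • v ∈ A) :
    x + v ∈ vcl A := by
  refine ⟨-v, fun δ hδ => ⟨min δ 1, ⟨by positivity, min_le_left _ _⟩, ?_⟩⟩
  convert h (1 - min δ 1) ⟨by linarith [min_le_right δ 1], by linarith [lt_min hδ one_pos]⟩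
    using 1
  module

theorem exists_linearMap_le_lt_of_sub_mem_span {A : Set E} (hA : Convex ℝ A)
    (hAcl : vcl A = A) {a₀ b : E} (ha₀ : a₀ ∈ icr A) (hb : b ∉ A)
    (hbL : b - a₀ ∈ Submodule.span ℝ (A - A)) :
    ∃ (f : E →ₗ[ℝ] ℝ) (r : ℝ), (∀ a ∈ A, f a ≤ r) ∧ r < f b := by
  set L := Submodule.span ℝ (A - A)
  let S : Set L := L.subtype ⁻¹' ((a₀ + ·) ⁻¹' A)
  have hS : Convex ℝ S := (hA.translate_preimage_right a₀).linear_preimage L.subtype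
  have h₀S : (0 : L) ∈ S := by simpa [S] using ha₀.1
  have hSabs : Absorbent ℝ S := absorbent_of_forall_exists_Icc_smul_mem fun d => ha₀.2 d d.2
  have hgauge : 1 < gauge S ⟨b - a₀, hbL⟩ := by
    refine lt_of_not_ge fun hle => hb ?_
    have hvcl : a₀ + (b - a₀) ∈ vcl A := mem_vcl_of_forall_Ico fun t ht =>
      setOfPred_gauge_lt_one_subset_self hS h₀S hSabs (show gauge S (t • ⟨b - a₀, hbL⟩) < 1 by
        rw [gauge_smul_of_nonneg ht.1, smul_eq_mul]
        nlinarith [ht.1, ht.2, gauge_nonneg (s := S) ⟨b - a₀, hbL⟩])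
    rwa [hAcl, add_sub_cancel] at hvcl
  obtain ⟨f₀, hf₀b, hf₀S⟩ := exists_linearMap_eq_gauge_le_gauge hS hSabs ⟨b - a₀, hbL⟩
  obtain ⟨f, hf⟩ := LinearMap.exists_extend f₀
  have hf_sub : ∀ x (hx : x - a₀ ∈ L), f x - f a₀ = f₀ ⟨x - a₀, hx⟩ := fun x hx => by
    rw [← map_sub, ← hf]; rfl
  refine ⟨f, f a₀ + 1, fun a ha => ?_, by linarith [hf_sub b hbL]⟩
  have haL : a - a₀ ∈ L := Submodule.subset_span (sub_mem_sub ha ha₀.1)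
  have := (hf₀S _).trans (gauge_le_one_of_mem (s := S) (x := ⟨a - a₀, haL⟩) (by simpa [S] using ha))
  linarith [hf_sub a haL]

theorem exists_linearMap_le_lt_of_notMem {A : Set E} (hA : Convex ℝ A) (hAcl : vcl A = A)
    {a₀ b : E} (ha₀ : a₀ ∈ icr A) (hb : b ∉ A) :
    ∃ (f : E →ₗ[ℝ] ℝ) (r : ℝ), (∀ a ∈ A, f a ≤ r) ∧ r < f b := by
  by_cases hbL : b - a₀ ∈ Submodule.span ℝ (A - A)
  · exact exists_linearMap_le_lt_of_sub_mem_span hA hAcl ha₀ hb hbL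
  obtain ⟨f, hfL, hfb⟩ := LinearMap.exists_extend_of_notMem (0 : _ →ₗ[ℝ] ℝ) hbL 1
  have hfA : ∀ a ∈ A, f a = f a₀ := fun a ha => sub_eq_zero.1 <| by
    rw [← map_sub]
    exact LinearMap.congr_fun hfL ⟨a - a₀, Submodule.subset_span (sub_mem_sub ha ha₀.1)⟩
  exact ⟨f, f a₀, fun a ha => (hfA a ha).le, by linarith [map_sub f b a₀]⟩

theorem cor_preimage_of_isOpen (g : E →ₗ[ℝ] ℝ) {U : Set ℝ} (hU : IsOpen U) :
    cor (g ⁻¹' U) = g ⁻¹' U := by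
  refine Subset.antisymm (fun x hx => hx.1) fun x hx => ⟨hx, fun d => ?_⟩
  have hev : ∀ᶠ t : ℝ in 𝓝 0, g x + t * g d ∈ U :=
    (Continuous.tendsto (by fun_prop) 0).eventually (hU.mem_nhds (by simpa using hx))
  obtain ⟨ε, hε, hεU⟩ := Metric.eventually_nhds_iff.1 hev
  refine ⟨ε / 2, half_pos hε, fun t ht => ?_⟩
  have := hεU (y := t) (by rw [Real.dist_0_eq_abs, abs_of_nonneg ht.1]; linarith [ht.2])
  simpa using this

theorem LinearMap.continuous_tauc (g : E →ₗ[ℝ] ℝ) : @Continuous E ℝ (tauc E) _ g := by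
  let := tauc E
  refine Real.isTopologicalBasis_Ioo_rat.continuous_iff.2 fun s hs => ?_
  simp only [mem_iUnion, mem_singleton_iff] at hs
  obtain ⟨a, b, -, rfl⟩ := hs
  exact TopologicalSpace.isOpen_generateFrom_of_mem
    ⟨(convex_Ioo _ _).linear_preimage g, cor_preimage_of_isOpen g isOpen_Ioo⟩

end

theorem stmt18_general {X : Type*} [AddCommGroup X] [Module ℝ X] {A B : Set X}
    (hA : Convex ℝ A) (hB : Convex ℝ B)
    (hdisj : Disjoint A B)
    (hAcl : vcl A = A) (hAsolid : (icr A).Nonempty)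
    (Y : Submodule ℝ X) (hBY : B ⊆ (Y : Set X))
    (hBcpt : @IsCompact Y (tauc Y) {y : Y | (y : X) ∈ B}) :
    ∃ (f : X →ₗ[ℝ] ℝ) (α β : ℝ), α < β ∧
      (∀ a ∈ A, f a ≤ α) ∧ (∀ b ∈ B, β ≤ f b) := by
  obtain ⟨a₀, ha₀⟩ := hAsolid
  choose F r hFA hFb using fun b : B =>
    exists_linearMap_le_lt_of_notMem hA hAcl ha₀ (hdisj.notMem_of_mem_right b.2)
  let Φ : X →ₗ[ℝ] (B → ℝ) := LinearMap.pi F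
  have hK : IsCompact (Φ '' B) := by
    let := tauc Y
    have hΦ : Continuous (Φ ∘ₗ Y.subtype) :=
      continuous_pi fun b => (F b ∘ₗ Y.subtype).continuous_tauc
    convert hBcpt.image hΦ using 1
    rw [LinearMap.coe_comp, image_comp]
    exact congrArg _ ((Subtype.image_preimage_coe _ _).trans (inter_eq_right.2 hBY)).symm
  have hdisjK : Disjoint (pi univ fun b => Iic (r b)) (Φ '' B) := by
    refine disjoint_left.2 fun v hv ⟨b, hb, hbv⟩ => ?_
    have := hv ⟨b, hb⟩ (mem_univ _)
    rw [← hbv] at this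
    exact (hFb ⟨b, hb⟩).not_ge this
  obtain ⟨g, α, β, hgA, hαβ, hgB⟩ := geometric_hahn_banach_closed_compact
    (convex_pi fun b _ => convex_Iic (r b)) (isClosed_set_pi fun b _ => isClosed_Iic)
    (hB.linear_image Φ) hK hdisjK
  exact ⟨g.toLinearMap ∘ₗ Φ, α, β, hαβ, fun a ha => (hgA _ fun b _ => hFA b a ha).le,
    fun b hb => (hgB _ ⟨b, hb, rfl⟩).le⟩

/-- Strong separation. Let `A, B` be disjoint nonempty convex subsets of `X`
with `A` vectorially closed and relatively solid, and `B` contained in a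
finite-dimensional subspace `Y` of `X` with `B` compact in `Y` (a finite-dimensional real
vector space carries a unique Hausdorff vector topology, which is its core convex
topology `tauc Y`). Then `A` and `B` are strongly separated by a linear functional. -/
theorem stmt18 {X : Type*} [AddCommGroup X] [Module ℝ X] {A B : Set X}
    (hA : Convex ℝ A) (hB : Convex ℝ B) (hAne : A.Nonempty) (hBne : B.Nonempty)
    (hdisj : Disjoint A B)
    (hAcl : vcl A = A) (hAsolid : (icr A).Nonempty)
    (Y : Submodule ℝ X) (hYfd : FiniteDimensional ℝ Y) (hBY : B ⊆ (Y : Set X))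
    (hBcpt : @IsCompact Y (tauc Y) {y : Y | (y : X) ∈ B}) :
    ∃ (f : X →ₗ[ℝ] ℝ) (α β : ℝ), α < β ∧
      (∀ a ∈ A, f a ≤ α) ∧ (∀ b ∈ B, β ≤ f b) :=
  stmt18_general hA hB hdisj hAcl hAsolid Y hBY hBcpt
end
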